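/- arXiv:1807.01507 — 2 statements merged into one kernel-verified Lean document; each statement's English description precedes it below -/
import Mathlib

section
/- Let Ω ⊆ ℝⁿ be open and u : Ω → ℝ a C³ function satisfying Δu = 1 on Ω. Define the P-function P = |∇u|² − (2/n)u. Then ΔP ≥ 0 on Ω, i.e., P is subharmonic. -/
open RealInnerProductSpace Finset

noncomputable def pd (n : ℕ) (f : EuclideanSpace ℝ (Fin n) → ℝ) (i : Fin n)
    (x : EuclideanSpace ℝ (Fin n)) : ℝ :=
  fderiv ℝ f x (EuclideanSpace.single i 1)

noncomputable def lap (n : ℕ) (f : EuclideanSpace ℝ (Fin n) → ℝ)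
    (x : EuclideanSpace ℝ (Fin n)) : ℝ :=
  ∑ i, pd n (pd n f i) i x

noncomputable def dvg (n : ℕ) (F : EuclideanSpace ℝ (Fin n) → EuclideanSpace ℝ (Fin n))
    (x : EuclideanSpace ℝ (Fin n)) : ℝ :=
  ∑ i, pd n (fun y => F y i) i x

/-! On `Ω` we have `P = ∑ⱼ (∂ⱼu)² - (2/n) u`. For `C³` functions the Laplacian commutes with
each `∂ⱼ`, so the flat Bochner identity reads `ΔP = 2 |∇²u|² + 2 ∑ⱼ ∂ⱼu ∂ⱼ(Δu) - (2/n) Δu`; as `Δu ≡ 1`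
the middle term vanishes and `ΔP = 2 |∇²u|² - 2/n`. Cauchy–Schwarz on the diagonal of the Hessian
gives `|∇²u|² ≥ (tr ∇²u)² / n = 1/n`. -/

open Filter Topology

theorem ContDiffAt.eventually_differentiableAt {𝕜 E F : Type*} [NontriviallyNormedField 𝕜]
    [NormedAddCommGroup E] [NormedSpace 𝕜 E] [NormedAddCommGroup F] [NormedSpace 𝕜 F]
    {f : E → F} {x : E} {m : WithTop ℕ∞} (hf : ContDiffAt 𝕜 m f x) (hm : 1 ≤ m) :
    ∀ᶠ y in 𝓝 x, DifferentiableAt 𝕜 f y :=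
  ((hf.of_le hm).eventually (by simp)).mono fun _ hy => hy.differentiableAt one_ne_zero

section PartialDerivatives

variable {n : ℕ} {f g : EuclideanSpace ℝ (Fin n) → ℝ} {x : EuclideanSpace ℝ (Fin n)}

theorem Filter.EventuallyEq.pd_eq (h : f =ᶠ[𝓝 x] g) (i : Fin n) : pd n f i x = pd n g i x := by
  rw [pd, pd, h.fderiv_eq]

theorem pd_const (c : ℝ) (i : Fin n) : pd n (fun _ => c) i x = 0 := by
  simp [pd]

theorem pd_sub (hf : DifferentiableAt ℝ f x) (hg : DifferentiableAt ℝ g x) (i : Fin n) :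
    pd n (fun y => f y - g y) i x = pd n f i x - pd n g i x := by
  simp [pd, fderiv_fun_sub hf hg]

theorem pd_const_mul (c : ℝ) (hf : DifferentiableAt ℝ f x) (i : Fin n) :
    pd n (fun y => c * f y) i x = c * pd n f i x := by
  simp [pd, fderiv_const_mul hf]

theorem pd_mul (hf : DifferentiableAt ℝ f x) (hg : DifferentiableAt ℝ g x) (i : Fin n) :
    pd n (fun y => f y * g y) i x = pd n f i x * g x + f x * pd n g i x := by
  simp [pd, fderiv_fun_mul hf hg]
  ring

theorem pd_sq (hf : DifferentiableAt ℝ f x) (i : Fin n) :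
    pd n (fun y => f y ^ 2) i x = 2 * f x * pd n f i x := by
  simp [pd, fderiv_fun_pow 2 hf]

theorem pd_sum {ι : Type*} (s : Finset ι) {F : ι → EuclideanSpace ℝ (Fin n) → ℝ}
    (hF : ∀ k ∈ s, DifferentiableAt ℝ (F k) x) (i : Fin n) :
    pd n (fun y => ∑ k ∈ s, F k y) i x = ∑ k ∈ s, pd n (F k) i x := by
  simp [pd, fderiv_fun_sum hF]

theorem contDiffAt_pd {m : ℕ} (hf : ContDiffAt ℝ (m + 1) f x) (i : Fin n) :
    ContDiffAt ℝ m (pd n f i) x :=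
  (hf.fderiv_right le_rfl).clm_apply contDiffAt_const

theorem differentiableAt_pd (hf : ContDiffAt ℝ 2 f x) (i : Fin n) :
    DifferentiableAt ℝ (pd n f i) x :=
  (contDiffAt_pd (m := 1) hf i).differentiableAt one_ne_zero

theorem pd_pd_eq_fderiv_fderiv (hf : ContDiffAt ℝ 2 f x) (i j : Fin n) :
    pd n (pd n f i) j x
      = fderiv ℝ (fderiv ℝ f) x (EuclideanSpace.single j 1) (EuclideanSpace.single i 1) := by
  have hDf : DifferentiableAt ℝ (fderiv ℝ f) x :=
    (hf.fderiv_right (m := 1) (by norm_num)).differentiableAt one_ne_zero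
  have hpd : pd n f i = fun y => fderiv ℝ f y (EuclideanSpace.single i 1) := rfl
  rw [pd, hpd, fderiv_clm_apply hDf (differentiableAt_const _)]
  simp

theorem pd_pd_comm (hf : ContDiffAt ℝ 2 f x) (i j : Fin n) :
    pd n (pd n f i) j x = pd n (pd n f j) i x := by
  rw [pd_pd_eq_fderiv_fderiv hf, pd_pd_eq_fderiv_fderiv hf]
  exact hf.isSymmSndFDerivAt (by simp) _ _

theorem sq_norm_gradient_eq_sum_sq_pd (y : EuclideanSpace ℝ (Fin n)) :
    ‖gradient f y‖ ^ 2 = ∑ j, pd n f j y ^ 2 := by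
  have hcoord (j : Fin n) : gradient f y j = pd n f j y := by
    have := EuclideanSpace.inner_single_right j (1 : ℝ) (gradient f y)
    rw [gradient, InnerProductSpace.toDual_symm_apply] at this
    simpa [pd, gradient] using this.symm
  simp [EuclideanSpace.norm_sq_eq, hcoord]

end PartialDerivatives

section Laplacian

variable {n : ℕ} {f g : EuclideanSpace ℝ (Fin n) → ℝ} {x : EuclideanSpace ℝ (Fin n)}

theorem lap_sub (hf : ContDiffAt ℝ 2 f x) (hg : ContDiffAt ℝ 2 g x) :
    lap n (fun y => f y - g y) x = lap n f x - lap n g x := by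
  rw [lap, lap, lap, ← Finset.sum_sub_distrib]
  refine Finset.sum_congr rfl fun i _ => ?_
  have hpd : pd n (fun y => f y - g y) i =ᶠ[𝓝 x] fun y => pd n f i y - pd n g i y := by
    filter_upwards [hf.eventually_differentiableAt one_le_two,
      hg.eventually_differentiableAt one_le_two] with y hfy hgy using pd_sub hfy hgy i
  rw [hpd.pd_eq, pd_sub (differentiableAt_pd hf i) (differentiableAt_pd hg i)]

theorem lap_const_mul (c : ℝ) (hf : ContDiffAt ℝ 2 f x) :
    lap n (fun y => c * f y) x = c * lap n f x := by
  rw [lap, lap, Finset.mul_sum]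
  refine Finset.sum_congr rfl fun i _ => ?_
  have hpd : pd n (fun y => c * f y) i =ᶠ[𝓝 x] fun y => c * pd n f i y := by
    filter_upwards [hf.eventually_differentiableAt one_le_two] with y hfy using pd_const_mul c hfy i
  rw [hpd.pd_eq, pd_const_mul c (differentiableAt_pd hf i)]

theorem lap_sum {ι : Type*} (s : Finset ι) {F : ι → EuclideanSpace ℝ (Fin n) → ℝ}
    (hF : ∀ k ∈ s, ContDiffAt ℝ 2 (F k) x) :
    lap n (fun y => ∑ k ∈ s, F k y) x = ∑ k ∈ s, lap n (F k) x := by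
  simp only [lap]
  rw [Finset.sum_comm]
  refine Finset.sum_congr rfl fun i _ => ?_
  have hpd : pd n (fun y => ∑ k ∈ s, F k y) i =ᶠ[𝓝 x] fun y => ∑ k ∈ s, pd n (F k) i y := by
    filter_upwards [(Filter.eventually_all_finset s).2
      fun k hk => (hF k hk).eventually_differentiableAt one_le_two] with y hy
    exact pd_sum s hy i
  rw [hpd.pd_eq, pd_sum s fun k hk => differentiableAt_pd (hF k hk) i]

theorem lap_sq (hf : ContDiffAt ℝ 2 f x) :
    lap n (fun y => f y ^ 2) x = 2 * ∑ i, pd n f i x ^ 2 + 2 * f x * lap n f x := by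
  rw [lap, lap, Finset.mul_sum, Finset.mul_sum, ← Finset.sum_add_distrib]
  refine Finset.sum_congr rfl fun i _ => ?_
  have hpd : pd n (fun y => f y ^ 2) i =ᶠ[𝓝 x] fun y => (2 * f y) * pd n f i y := by
    filter_upwards [hf.eventually_differentiableAt one_le_two] with y hfy using pd_sq hfy i
  have hfx : DifferentiableAt ℝ f x := hf.differentiableAt (by simp)
  rw [hpd.pd_eq, pd_mul (hfx.const_mul 2) (differentiableAt_pd hf i), pd_const_mul 2 hfx]
  ring

theorem lap_pd (hf : ContDiffAt ℝ 3 f x) (j : Fin n) :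
    lap n (pd n f j) x = pd n (lap n f) j x := by
  have hpd (i : Fin n) : ContDiffAt ℝ 2 (pd n f i) x := contDiffAt_pd hf i
  have hswap (i : Fin n) : pd n (pd n f j) i =ᶠ[𝓝 x] pd n (pd n f i) j := by
    filter_upwards [(hf.of_le (m := 2) (by norm_num)).eventually (by simp)] with y hy
    exact pd_pd_comm hy j i
  calc lap n (pd n f j) x
      = ∑ i, pd n (pd n (pd n f i) i) j x :=
        Finset.sum_congr rfl fun i _ => by rw [(hswap i).pd_eq, pd_pd_comm (hpd i)]
    _ = pd n (lap n f) j x :=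
        (pd_sum _ (fun i _ => differentiableAt_pd (hpd i) i) j).symm

theorem lap_sum_sq_pd (hf : ContDiffAt ℝ 3 f x) :
    lap n (fun y => ∑ j, pd n f j y ^ 2) x
      = 2 * ∑ j, ∑ i, pd n (pd n f j) i x ^ 2 + 2 * ∑ j, pd n f j x * pd n (lap n f) j x := by
  have hpd (j : Fin n) : ContDiffAt ℝ 2 (pd n f j) x := contDiffAt_pd hf j
  rw [lap_sum _ fun j _ => (hpd j).pow 2, Finset.mul_sum, Finset.mul_sum,
    ← Finset.sum_add_distrib]
  refine Finset.sum_congr rfl fun j _ => ?_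
  rw [lap_sq (hpd j), lap_pd hf j]
  ring

end Laplacian

theorem Matrix.sq_trace_div_card_le_sum_sq {ι R : Type*} [Fintype ι] [Field R] [LinearOrder R]
    [IsStrictOrderedRing R] (A : Matrix ι ι R) :
    A.trace ^ 2 / Fintype.card ι ≤ ∑ i, ∑ j, A i j ^ 2 :=
  calc A.trace ^ 2 / Fintype.card ι ≤ ∑ i, A i i ^ 2 := by
        simpa [Matrix.trace] using
          Finset.sq_sum_div_le_sum_sq_div Finset.univ A.diag (g := fun _ => 1) (by simp)
    _ ≤ ∑ i, ∑ j, A i j ^ 2 := Finset.sum_le_sum fun i _ =>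
        Finset.single_le_sum (f := fun j => A i j ^ 2) (fun j _ => sq_nonneg _)
          (Finset.mem_univ i)

theorem stmt_8_general (n : ℕ) (Ω : Set (EuclideanSpace ℝ (Fin n))) (hΩ : IsOpen Ω)
    (u : EuclideanSpace ℝ (Fin n) → ℝ) (hu : ContDiffOn ℝ 3 u Ω)
    (hΔ : ∀ x ∈ Ω, lap n u x = 1)
    (P : EuclideanSpace ℝ (Fin n) → ℝ)
    (hP : ∀ x, P x = ‖gradient u x‖ ^ 2 - (2 / n) * u x) :
    ∀ x ∈ Ω, 0 ≤ lap n P x := by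
  intro x hx
  have hu3 : ContDiffAt ℝ 3 u x := hu.contDiffAt (hΩ.mem_nhds hx)
  have hu2 : ContDiffAt ℝ 2 u x := hu3.of_le (by norm_num)
  have hpd_lap (j : Fin n) : pd n (lap n u) j x = 0 := by
    have hlap : lap n u =ᶠ[𝓝 x] fun _ => 1 := eventually_of_mem (hΩ.mem_nhds hx) hΔ
    rw [hlap.pd_eq, pd_const]
  have hP_eq : P = fun y => ∑ j, pd n u j y ^ 2 - 2 / n * u y :=
    funext fun y => by rw [hP, sq_norm_gradient_eq_sum_sq_pd]
  have hlapP : lap n P x = 2 * ∑ j, ∑ i, pd n (pd n u j) i x ^ 2 - 2 / n := by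
    rw [hP_eq, lap_sub (ContDiffAt.sum fun j _ => (contDiffAt_pd hu3 j).pow 2)
      (contDiffAt_const.mul hu2), lap_const_mul _ hu2, lap_sum_sq_pd hu3, hΔ x hx]
    simp [hpd_lap]
  have hHess := Matrix.sq_trace_div_card_le_sum_sq (Matrix.of fun j i => pd n (pd n u j) i x)
  have htrace : (Matrix.of fun j i => pd n (pd n u j) i x).trace = 1 := hΔ x hx
  rw [htrace, one_pow, Fintype.card_fin] at hHess
  rw [hlapP, sub_nonneg, ← mul_one_div]
  gcongr
  simpa using hHess

theorem stmt_8 (n : ℕ) (hn : 1 ≤ n) (Ω : Set (EuclideanSpace ℝ (Fin n))) (hΩ : IsOpen Ω)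
    (u : EuclideanSpace ℝ (Fin n) → ℝ) (hu : ContDiffOn ℝ 3 u Ω)
    (hΔ : ∀ x ∈ Ω, lap n u x = 1)
    (P : EuclideanSpace ℝ (Fin n) → ℝ)
    (hP : ∀ x, P x = ‖gradient u x‖ ^ 2 - (2 / n) * u x) :
    ∀ x ∈ Ω, 0 ≤ lap n P x :=
  stmt_8_general n Ω hΩ u hu hΔ P hP
end

section
/- Let Ω ⊆ ℝⁿ be open, u : Ω → ℝ a C² function with Δu = 1 on Ω, and X_n(x) = x_n·x − (1/2)(|x|²+1)E_n. Then the pointwise differential identity div(u·X_n − ⟨X_n, ∇u⟩·∇u) = n·x_n·u − x_n·|∇u|² − (1/2)⟨X_n, ∇(|∇u|²)⟩ holds on Ω (wherever u is C²; interpret ∇(|∇u|²) via the Hessian: ∇(|∇u|²) = 2(∇²u)∇u). -/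
open RealInnerProductSpace Finset

/-!
By the product rule, for any vector field `X`,
`div (u X - ⟪X, ∇u⟫ ∇u) = u div X - ⟪(DX) ∇u, ∇u⟫ - ⟪X, (∇²u) ∇u⟫ + (1 - Δu) ⟪X, ∇u⟫`,
and the symmetry of the Hessian turns `⟪X, (∇²u) ∇u⟫` into `½ ⟪X, ∇|∇u|²⟫`.
The field `X_n` is conformal Killing: `div X_n = n x_n` and `⟪(DX_n) v, v⟫ = x_n |v|²`;
together with `Δu = 1` this gives the identity.
-/

section Gradient

variable {E : Type*} [NormedAddCommGroup E] [InnerProductSpace ℝ E] [CompleteSpace E]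
  {u : E → ℝ} {x : E}

theorem hasFDerivAt_gradient (hu : DifferentiableAt ℝ (fderiv ℝ u) x) :
    HasFDerivAt (gradient u)
      ((InnerProductSpace.toDual ℝ E).symm.toContinuousLinearEquiv.toContinuousLinearMap ∘L
        fderiv ℝ (fderiv ℝ u) x) x :=
  (InnerProductSpace.toDual ℝ E).symm.toContinuousLinearEquiv.toContinuousLinearMap.hasFDerivAt
    |>.comp x hu.hasFDerivAt

theorem inner_fderiv_gradient_apply (hu : DifferentiableAt ℝ (fderiv ℝ u) x) (v w : E) :
    ⟪fderiv ℝ (gradient u) x v, w⟫ = fderiv ℝ (fderiv ℝ u) x v w := by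
  rw [(hasFDerivAt_gradient hu).fderiv]
  exact InnerProductSpace.toDual_symm_apply

theorem IsSymmSndFDerivAt.inner_fderiv_gradient_comm (hsymm : IsSymmSndFDerivAt ℝ u x)
    (hu : DifferentiableAt ℝ (fderiv ℝ u) x) (v w : E) :
    ⟪fderiv ℝ (gradient u) x v, w⟫ = ⟪v, fderiv ℝ (gradient u) x w⟫ := by
  rw [← real_inner_comm v, inner_fderiv_gradient_apply hu, inner_fderiv_gradient_apply hu, hsymm]

theorem fderiv_norm_sq_gradient_apply (hu : DifferentiableAt ℝ (fderiv ℝ u) x) (v : E) :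
    fderiv ℝ (fun y => ‖gradient u y‖ ^ 2) x v =
      2 * ⟪gradient u x, fderiv ℝ (gradient u) x v⟫ := by
  rw [((hasFDerivAt_gradient hu).norm_sq).fderiv, ← (hasFDerivAt_gradient hu).fderiv]
  simp

end Gradient

section ConformalKillingField

variable {E : Type*} [NormedAddCommGroup E] [InnerProductSpace ℝ E]

/-- With `e = EuclideanSpace.single N 1`, this is the field `X_n` of the statement. -/
noncomputable def conformalKillingField (e y : E) : E :=
  ⟪e, y⟫ • y - ((‖y‖ ^ 2 + 1) / 2) • e

theorem hasFDerivAt_conformalKillingField (e x : E) :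
    HasFDerivAt (conformalKillingField e)
      ((innerSL ℝ e).smulRight x + ⟪e, x⟫ • ContinuousLinearMap.id ℝ E
        - (innerSL ℝ x).smulRight e) x := by
  have hquad : HasFDerivAt (fun y : E => (‖y‖ ^ 2 + 1) / 2) (innerSL ℝ x) x := by
    simp_rw [div_eq_mul_inv]
    refine (((hasFDerivAt_id x).norm_sq.add_const 1).mul_const (2⁻¹ : ℝ)).congr_fderiv ?_
    ext v; simp
  refine (((innerSL ℝ e).hasFDerivAt.smul (hasFDerivAt_id x)).sub
    (hquad.smul_const e)).congr_fderiv ?_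
  ext v; simp [add_comm]

theorem fderiv_conformalKillingField_apply (e x v : E) :
    fderiv ℝ (conformalKillingField e) x v = ⟪e, v⟫ • x + ⟪e, x⟫ • v - ⟪x, v⟫ • e := by
  simp [(hasFDerivAt_conformalKillingField e x).fderiv]

theorem inner_fderiv_conformalKillingField_apply_self (e x v : E) :
    ⟪fderiv ℝ (conformalKillingField e) x v, v⟫ = ⟪e, x⟫ * ‖v‖ ^ 2 := by
  rw [fderiv_conformalKillingField_apply, inner_sub_left, inner_add_left, real_inner_smul_left,
    real_inner_smul_left, real_inner_smul_left, real_inner_self_eq_norm_sq]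
  ring

end ConformalKillingField

section Euclidean

variable {n : ℕ}

theorem ContinuousLinearMap.apply_eq_sum_single (ℓ : EuclideanSpace ℝ (Fin n) →L[ℝ] ℝ)
    (v : EuclideanSpace ℝ (Fin n)) : ℓ v = ∑ i, v i * ℓ (EuclideanSpace.single i 1) := by
  conv_lhs => rw [← (EuclideanSpace.basisFun (Fin n) ℝ).sum_repr v]
  simp [map_sum]

theorem pd_eq_gradient_apply (u : EuclideanSpace ℝ (Fin n) → ℝ) (i : Fin n) :
    pd n u i = fun y => gradient u y i := by
  funext y
  rw [pd, ← inner_gradient_left, EuclideanSpace.inner_single_right]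
  simp

theorem lap_eq_dvg_gradient (u : EuclideanSpace ℝ (Fin n) → ℝ) :
    lap n u = dvg n (gradient u) := by
  funext x
  simp only [lap, dvg, pd_eq_gradient_apply]

variable {F G : EuclideanSpace ℝ (Fin n) → EuclideanSpace ℝ (Fin n)} {x : EuclideanSpace ℝ (Fin n)}

theorem dvg_eq_sum_fderiv_apply (hF : DifferentiableAt ℝ F x) :
    dvg n F x = ∑ i, fderiv ℝ F x (EuclideanSpace.single i 1) i :=
  Finset.sum_congr rfl fun i _ => congrArg (· (EuclideanSpace.single i 1))
    ((PiLp.proj 2 (fun _ : Fin n => ℝ) i).hasFDerivAt.comp x hF.hasFDerivAt).fderiv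

theorem dvg_sub (hF : DifferentiableAt ℝ F x) (hG : DifferentiableAt ℝ G x) :
    dvg n (fun y => F y - G y) x = dvg n F x - dvg n G x := by
  rw [dvg_eq_sum_fderiv_apply (hF.fun_sub hG), dvg_eq_sum_fderiv_apply hF,
    dvg_eq_sum_fderiv_apply hG, fderiv_fun_sub hF hG, ← Finset.sum_sub_distrib]
  rfl

theorem dvg_smul {f : EuclideanSpace ℝ (Fin n) → ℝ} (hf : DifferentiableAt ℝ f x)
    (hG : DifferentiableAt ℝ G x) :
    dvg n (fun y => f y • G y) x = fderiv ℝ f x (G x) + f x * dvg n G x := by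
  rw [dvg_eq_sum_fderiv_apply (hf.fun_smul hG), dvg_eq_sum_fderiv_apply hG, fderiv_fun_smul hf hG,
    (fderiv ℝ f x).apply_eq_sum_single, Finset.mul_sum, ← Finset.sum_add_distrib]
  refine Finset.sum_congr rfl fun i _ => ?_
  simp only [add_apply, smul_apply, ContinuousLinearMap.smulRight_apply, PiLp.add_apply,
    PiLp.smul_apply, smul_eq_mul]
  ring

theorem dvg_conformalKillingField (e : EuclideanSpace ℝ (Fin n)) :
    dvg n (conformalKillingField e) x = n * ⟪e, x⟫ := by
  rw [dvg_eq_sum_fderiv_apply (hasFDerivAt_conformalKillingField e x).differentiableAt]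
  simp [fderiv_conformalKillingField_apply, EuclideanSpace.inner_single_right, mul_comm]

theorem dvg_smul_sub_inner_gradient_smul_gradient {u : EuclideanSpace ℝ (Fin n) → ℝ}
    {X : EuclideanSpace ℝ (Fin n) → EuclideanSpace ℝ (Fin n)} (hu : ContDiffAt ℝ 2 u x)
    (hX : DifferentiableAt ℝ X x) :
    dvg n (fun y => u y • X y - ⟪X y, gradient u y⟫ • gradient u y) x =
      u x * dvg n X x - ⟪fderiv ℝ X x (gradient u x), gradient u x⟫
        - (1 / 2) * fderiv ℝ (fun y => ‖gradient u y‖ ^ 2) x (X x)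
        + (1 - lap n u x) * ⟪X x, gradient u x⟫ := by
  have hDu : DifferentiableAt ℝ u x := hu.differentiableAt two_ne_zero
  have hD2u : DifferentiableAt ℝ (fderiv ℝ u) x :=
    (hu.fderiv_right (m := 1) le_rfl).differentiableAt one_ne_zero
  have hgrad : DifferentiableAt ℝ (gradient u) x := (hasFDerivAt_gradient hD2u).differentiableAt
  have hsymm := (hu.isSymmSndFDerivAt (by simp)).inner_fderiv_gradient_comm hD2u
  rw [dvg_sub (hDu.fun_smul hX) ((hX.inner ℝ hgrad).fun_smul hgrad), dvg_smul hDu hX,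
    dvg_smul (hX.inner ℝ hgrad) hgrad, ← lap_eq_dvg_gradient, fderiv_inner_apply ℝ hX hgrad,
    fderiv_norm_sq_gradient_apply hD2u, ← inner_gradient_left, ← hsymm,
    real_inner_comm (gradient u x), real_inner_comm (X x) (gradient u x)]
  ring

end Euclidean

theorem stmt_11_general (n : ℕ) (N : Fin n)
    (Ω : Set (EuclideanSpace ℝ (Fin n))) (hΩ : IsOpen Ω)
    (u : EuclideanSpace ℝ (Fin n) → ℝ) (hu : ContDiffOn ℝ 2 u Ω)
    (hΔ : ∀ x ∈ Ω, lap n u x = 1)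
    (X : EuclideanSpace ℝ (Fin n) → EuclideanSpace ℝ (Fin n))
    (hX : ∀ x, X x = x N • x - ((‖x‖ ^ 2 + 1) / 2) • EuclideanSpace.single N 1)
    (F : EuclideanSpace ℝ (Fin n) → EuclideanSpace ℝ (Fin n))
    (hF : ∀ y, F y = u y • X y - (⟪X y, gradient u y⟫ : ℝ) • gradient u y) :
    ∀ x ∈ Ω, dvg n F x
      = n * x N * u x - x N * ‖gradient u x‖ ^ 2
        - (1 / 2) * fderiv ℝ (fun y => ‖gradient u y‖ ^ 2) x (X x) := by
  intro x hx
  have hinner_single : ∀ y : EuclideanSpace ℝ (Fin n), ⟪EuclideanSpace.single N 1, y⟫ = y N := by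
    simp [EuclideanSpace.inner_single_left]
  obtain rfl : X = conformalKillingField (EuclideanSpace.single N 1) := by
    funext y
    rw [hX, conformalKillingField, hinner_single]
  obtain rfl : F = fun y => u y • conformalKillingField _ y - _ := funext hF
  rw [dvg_smul_sub_inner_gradient_smul_gradient (hu.contDiffAt (hΩ.mem_nhds hx))
      (hasFDerivAt_conformalKillingField _ x).differentiableAt,
    hΔ x hx, dvg_conformalKillingField, inner_fderiv_conformalKillingField_apply_self,
    hinner_single]
  ring

theorem stmt_11 (n : ℕ) (hn : 1 ≤ n) (N : Fin n) (hN : (N : ℕ) = n - 1)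
    (Ω : Set (EuclideanSpace ℝ (Fin n))) (hΩ : IsOpen Ω)
    (u : EuclideanSpace ℝ (Fin n) → ℝ) (hu : ContDiffOn ℝ 2 u Ω)
    (hΔ : ∀ x ∈ Ω, lap n u x = 1)
    (X : EuclideanSpace ℝ (Fin n) → EuclideanSpace ℝ (Fin n))
    (hX : ∀ x, X x = x N • x - ((‖x‖ ^ 2 + 1) / 2) • EuclideanSpace.single N 1)
    (F : EuclideanSpace ℝ (Fin n) → EuclideanSpace ℝ (Fin n))
    (hF : ∀ y, F y = u y • X y - (⟪X y, gradient u y⟫ : ℝ) • gradient u y) :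
    ∀ x ∈ Ω, dvg n F x
      = n * x N * u x - x N * ‖gradient u x‖ ^ 2
        - (1 / 2) * fderiv ℝ (fun y => ‖gradient u y‖ ^ 2) x (X x) :=
  stmt_11_general n N Ω hΩ u hu hΔ X hX F hF
end
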